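/- With |χ_0⟩ = |0⟩, |χ_1⟩ = cos(θ/2)|0⟩ + sin(θ/2)|1⟩, |χ_2⟩ = cos(θ/2)|0⟩ − sin(θ/2)|1⟩ for 0 < θ < π, there is no 2×2 density matrix ρ satisfying ⟨χ_0|ρ|χ_1⟩ = ⟨χ_1|ρ|χ_2⟩ = ⟨χ_2|ρ|χ_0⟩ = 0. -/
import Mathlib


open ComplexOrder Matrix

noncomputable def χ0 : Fin 2 → ℂ := ![1, 0]
noncomputable def χ1 (θ : ℝ) : Fin 2 → ℂ := ![(Real.cos (θ/2) : ℂ), (Real.sin (θ/2) : ℂ)]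
noncomputable def χ2 (θ : ℝ) : Fin 2 → ℂ := ![(Real.cos (θ/2) : ℂ), -(Real.sin (θ/2) : ℂ)]

theorem stmt9 (θ : ℝ) (hθ : 0 < θ ∧ θ < Real.pi) :
    ¬ ∃ ρ : Matrix (Fin 2) (Fin 2) ℂ, ρ.PosSemidef ∧ ρ.trace = 1 ∧
      star χ0 ⬝ᵥ ρ.mulVec (χ1 θ) = 0 ∧
      star (χ1 θ) ⬝ᵥ ρ.mulVec (χ2 θ) = 0 ∧
      star (χ2 θ) ⬝ᵥ ρ.mulVec χ0 = 0 := by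
  obtain ⟨hθ0, hθπ⟩ := hθ
  rintro ⟨ρ, hpsd, htr, h1, h2, h3⟩
  have hS : 0 < Real.sin (θ/2) :=
    Real.sin_pos_of_pos_of_lt_pi (by linarith) (by linarith [Real.pi_pos])
  have hC : 0 < Real.cos (θ/2) :=
    Real.cos_pos_of_mem_Ioo ⟨by linarith [Real.pi_pos], by linarith⟩
  set C : ℝ := Real.cos (θ/2) with hCdef
  set S : ℝ := Real.sin (θ/2) with hSdef
  have hSne : (S : ℂ) ≠ 0 := by exact_mod_cast hS.ne'
  have hCne : (C : ℂ) ≠ 0 := by exact_mod_cast hC.ne'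
  have hherm := hpsd.isHermitian
  have h10 : ρ 1 0 = star (ρ 0 1) := by
    have := congrFun (congrFun hherm.eq 1) 0
    simpa [Matrix.conjTranspose_apply] using this.symm
  have h00 : ρ 0 0 = star (ρ 0 0) := by
    have := congrFun (congrFun hherm.eq 0) 0
    simpa [Matrix.conjTranspose_apply] using this.symm
  simp only [χ0, χ1, χ2, Matrix.mulVec, dotProduct, Fin.sum_univ_two,
    Matrix.cons_val_zero, Matrix.cons_val_one, Matrix.head_cons, Pi.star_apply,
    Matrix.trace_fin_two, star_one, star_zero, Complex.star_def, map_neg, RingHom.map_one, RingHom.map_zero,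
    Complex.conj_ofReal] at h1 h2 h3 htr
  -- h1 : 1 * (ρ 0 0 * C + ρ 0 1 * S) + 0 * ... = 0 etc.
  have e1 : ρ 0 0 * C + ρ 0 1 * S = 0 := by linear_combination h1
  have e3 : ρ 0 0 * C - ρ 1 0 * S = 0 := by linear_combination h3
  -- from e1 and e3 : (ρ 0 1 + ρ 1 0) * S = 0
  have hbc : ρ 1 0 = -ρ 0 1 := by
    have hsum : (ρ 0 1 + ρ 1 0) * (S : ℂ) = 0 := by linear_combination e1 - e3
    rcases mul_eq_zero.mp hsum with h | h
    · linear_combination h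
    · exact absurd h hSne
  -- b := ρ 0 1 satisfies star b = -b
  have hstarb : star (ρ 0 1) = -ρ 0 1 := by rw [← h10, hbc]
  -- b = -a*C/S is "real" since a is real
  have hbval : ρ 0 1 = -(ρ 0 0) * C / S := by
    rw [eq_div_iff hSne]
    linear_combination e1
  have hbreal : star (ρ 0 1) = ρ 0 1 := by
    rw [hbval, Complex.star_def, map_div₀, _root_.map_mul, map_neg, Complex.conj_ofReal,
      Complex.conj_ofReal, ← Complex.star_def, ← h00]
  have hb0 : ρ 0 1 = 0 := by
    have h' : ρ 0 1 = -ρ 0 1 := hbreal.symm.trans hstarb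
    linear_combination h' / 2
  have ha0 : ρ 0 0 = 0 := by
    have : ρ 0 0 * (C : ℂ) = 0 := by rw [hb0] at e1; linear_combination e1
    rcases mul_eq_zero.mp this with h | h
    · exact h
    · exact absurd h hCne
  have hd1 : ρ 1 1 = 1 := by linear_combination htr - ha0
  -- now h2 gives -S^2 = 0
  have : -(S : ℂ) * S = 0 := by
    rw [hbc] at h2
    linear_combination h2 - (C:ℂ)^2 * ha0 + 2*(C:ℂ)*(S:ℂ)*hb0 + (S:ℂ)^2*hd1 - ((C:ℂ)^2 + 1) * ha0 * 0
  have : (S : ℂ) = 0 := by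
    rcases mul_eq_zero.mp this with h | h
    · simpa using h
    · exact h
  exact hSne this
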